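/- For 1-parameter persistence modules, if M and N are δ-matched (i.e., there is a partial bijection between their indecomposable summands matching δ-interleaved pairs and leaving only 2δ-trivial summands unmatched), then M and N are δ-interleaved. Consequently the interleaving distance is at most the bottleneck distance: d_I(M,N) ≤ d_B(M,N). -/

import Mathlib

open scoped ENNReal NNReal
open Filter
noncomputable section
attribute [local instance] Classical.propDecidable
set_option linter.unusedVariables false

/-- Points of the poset ℝⁿ. The product instance gives the pointwise partial order
and the sup-norm metric. -/
abbrev Pt (n : ℕ) := Fin n → ℝ

/-- The diagonal vector δ⃗ = (δ,...,δ). -/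
def diag (n : ℕ) (δ : ℝ) : Pt n := fun _ => δ

lemma le_add_diag {n : ℕ} (x : Pt n) {δ : ℝ} (hδ : 0 ≤ δ) : x ≤ x + diag n δ :=
  fun _ => le_add_of_nonneg_right hδ

/-- A (p.f.d.-agnostic) persistence module over the poset ℝⁿ with values in
k-vector spaces: a functor from ℝⁿ to Vec. -/
structure PersMod (n : ℕ) (k : Type*) [Field k] where
  V : Pt n → Type*
  [addgrp : ∀ x, AddCommGroup (V x)]
  [mod : ∀ x, Module k (V x)]
  ρ : ∀ {x y : Pt n}, x ≤ y → (V x →ₗ[k] V y)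
  ρ_id : ∀ x : Pt n, ρ (le_refl x) = LinearMap.id
  ρ_comp : ∀ {x y z : Pt n} (h1 : x ≤ y) (h2 : y ≤ z), ρ (h1.trans h2) = (ρ h2).comp (ρ h1)

attribute [instance] PersMod.addgrp PersMod.mod

variable {n : ℕ} {k : Type*} [Field k]

/-- A morphism (natural transformation) of persistence modules. -/
structure PersHom (M N : PersMod n k) where
  app : ∀ x, M.V x →ₗ[k] N.V x
  natural : ∀ {x y : Pt n} (h : x ≤ y), (app y).comp (M.ρ h) = (N.ρ h).comp (app x)

/-- A δ-interleaving between M and N: families φ_x : M_x → N_{x+δ⃗},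
ψ_x : N_x → M_{x+δ⃗} satisfying square and triangular commutativity. -/
def PersMod.Interleaved (M N : PersMod n k) (δ : ℝ≥0) : Prop :=
  ∃ (φ : ∀ x : Pt n, M.V x →ₗ[k] N.V (x + diag n (δ : ℝ)))
    (ψ : ∀ x : Pt n, N.V x →ₗ[k] M.V (x + diag n (δ : ℝ))),
    (∀ {x y : Pt n} (h : x ≤ y),
        (φ y).comp (M.ρ h) = (N.ρ (add_le_add h le_rfl)).comp (φ x)) ∧
    (∀ {x y : Pt n} (h : x ≤ y),
        (ψ y).comp (N.ρ h) = (M.ρ (add_le_add h le_rfl)).comp (ψ x)) ∧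
    (∀ x : Pt n, M.ρ ((le_add_diag x δ.coe_nonneg).trans (le_add_diag _ δ.coe_nonneg))
        = (ψ (x + diag n (δ : ℝ))).comp (φ x)) ∧
    (∀ x : Pt n, N.ρ ((le_add_diag x δ.coe_nonneg).trans (le_add_diag _ δ.coe_nonneg))
        = (φ (x + diag n (δ : ℝ))).comp (ψ x))

/-- The interleaving distance (∞ if no interleaving exists). -/
def PersMod.dI (M N : PersMod n k) : ℝ≥0∞ :=
  ⨅ (δ : ℝ≥0) (_ : M.Interleaved N δ), (δ : ℝ≥0∞)

/-- The diagonal shift M_{→d}. -/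
def PersMod.dshift (M : PersMod n k) (d : ℝ) : PersMod n k where
  V x := M.V (x + diag n d)
  ρ h := M.ρ (add_le_add h le_rfl)
  ρ_id x := M.ρ_id _
  ρ_comp h1 h2 := M.ρ_comp _ _

/-- M is c-trivial: every structure map over a diagonal shift by c is zero. -/
def PersMod.DTrivial (M : PersMod n k) (c : ℝ≥0) : Prop :=
  ∀ x : Pt n, M.ρ (le_add_diag x c.coe_nonneg) = 0

/-- The 1-parameter slice of M along the diagonal line through x. -/
def PersMod.slice (M : PersMod n k) (x : Pt n) : PersMod 1 k where
  V t := M.V (x + diag n (t 0))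
  ρ {t t'} h := M.ρ (fun i => add_le_add (le_refl (x i)) (h 0))
  ρ_id t := M.ρ_id _
  ρ_comp h1 h2 := M.ρ_comp _ _

/-- δ* = sup over diagonal lines of the slice interleaving distances. -/
def deltaStar (M N : PersMod n k) : ℝ≥0∞ :=
  ⨆ x : Pt n, (M.slice x).dI (N.slice x)

/-- Finite direct sum of persistence modules. -/
def dirSum {ι : Type} [Fintype ι] (Ms : ι → PersMod n k) : PersMod n k where
  V x := ∀ i, (Ms i).V x
  ρ h := LinearMap.pi (fun i => ((Ms i).ρ h).comp (LinearMap.proj i))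
  ρ_id x := by
    apply LinearMap.ext; intro v; funext i
    simp [(Ms i).ρ_id]
  ρ_comp h1 h2 := by
    apply LinearMap.ext; intro v; funext i
    show ((Ms i).ρ (h1.trans h2)) (v i) = _
    rw [(Ms i).ρ_comp h1 h2]; rfl

/-- Zigzag reachability inside a set: p ≤ p₁ ≥ p₂ ≤ ... with all points in A. -/
def Zigzag (A : Set (Pt n)) : Pt n → Pt n → Prop :=
  Relation.ReflTransGen (fun a b => a ∈ A ∧ b ∈ A ∧ (a ≤ b ∨ b ≤ a))

/-- An interval: nonempty, order-convex, zigzag-connected. -/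
def IsPInterval (I : Set (Pt n)) : Prop :=
  I.Nonempty ∧ (∀ p ∈ I, ∀ q ∈ I, ∀ r, p ≤ r → r ≤ q → r ∈ I) ∧
    ∀ p ∈ I, ∀ q ∈ I, Zigzag I p q

/-- Q is a (zigzag-)connected component of A. -/
def IsComponent (A Q : Set (Pt n)) : Prop :=
  ∃ p ∈ A, Q = {q | Zigzag A p q}

/-- The fibre of the interval module with interval I: k on I, 0 elsewhere,
realised as a submodule of k. -/
def subOf (k : Type*) [Field k] (I : Set (Pt n)) (x : Pt n) : Submodule k k :=
  if x ∈ I then ⊤ else ⊥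

/-- The canonical map between fibres: identity within I, zero otherwise. -/
def stepFun (I : Set (Pt n)) (x y : Pt n) :
    ↥(subOf k I x) →ₗ[k] ↥(subOf k I y) where
  toFun v := ⟨if y ∈ I then (v : k) else 0, by
    by_cases hy : y ∈ I
    · simp only [subOf, if_pos hy]; exact Submodule.mem_top
    · simp only [subOf, if_neg hy]; exact Submodule.zero_mem _⟩
  map_add' a b := by
    by_cases hy : y ∈ I <;> · apply Subtype.ext; simp [hy]
  map_smul' c a := by
    by_cases hy : y ∈ I <;> · apply Subtype.ext; simp [hy]

/-- The interval module with interval I. -/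
def IntervalMod (k : Type*) [Field k] (I : Set (Pt n)) (hI : IsPInterval I) :
    PersMod n k where
  V x := ↥(subOf k I x)
  ρ {x y} _ := stepFun I x y
  ρ_id x := by
    apply LinearMap.ext; intro v
    apply Subtype.ext
    by_cases hx : x ∈ I
    · simp [stepFun, hx]
    · have hv : (v : k) = 0 := by
        have h2 := v.2
        simp only [subOf, hx, if_false] at h2
        exact (Submodule.mem_bot k).1 h2
      simp [stepFun, hx, hv]
  ρ_comp {x y z} h1 h2 := by
    apply LinearMap.ext; intro v
    apply Subtype.ext
    by_cases hz : z ∈ I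
    · by_cases hy : y ∈ I
      · simp [stepFun, hy, hz]
      · have hx : x ∉ I := fun hx => hy (hI.2.1 x hx z hz y h1 h2)
        have hv : (v : k) = 0 := by
          have h2 := v.2
          simp only [subOf, hx, if_false] at h2
          exact (Submodule.mem_bot k).1 h2
        simp [stepFun, hy, hz, hv]
    · simp [stepFun, hz]

/-- Lower boundary L(I). -/
def lowerBd (I : Set (Pt n)) : Set (Pt n) :=
  {x | x ∈ closure I ∧ ∀ y : Pt n, (∀ i, y i < x i) → y ∉ I}

/-- Upper boundary U(I). -/
def upperBd (I : Set (Pt n)) : Set (Pt n) :=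
  {x | x ∈ closure I ∧ ∀ y : Pt n, (∀ i, x i < y i) → y ∉ I}

/-- Diagonal distance dl(x, A): the infimum of sup-norm distances from x to
points of A along the diagonal line Δ_x, ∞ when Δ_x ∩ A = ∅. -/
def dl (x : Pt n) (A : Set (Pt n)) : ℝ≥0∞ :=
  ⨅ (α : ℝ) (_ : x + diag n α ∈ A), ENNReal.ofReal |α|

/-- d_triv^{(M,N)}(x) = max(dl(x,U(I_M))/2, dl(x,L(I_N))/2). -/
def dtriv (IM IN : Set (Pt n)) (x : Pt n) : ℝ≥0∞ :=
  max (dl x (upperBd IM) / 2) (dl x (lowerBd IN) / 2)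

/-- An intersection component with interval Q is δ_{(M,N)}-trivializable. -/
def Trivializable (IM IN Q : Set (Pt n)) (δ : ℝ≥0∞) : Prop :=
  ∀ x ∈ Q, dtriv IM IN x < δ

/-- (M,N)-validity of an intersection component with interval Q. -/
def MNValid (IM IN Q : Set (Pt n)) : Prop :=
  ∀ x ∈ Q, (∀ y : Pt n, y ≤ x → y ∈ IM → y ∈ IN) ∧
    (∀ z : Pt n, x ≤ z → z ∈ IN → z ∈ IM)

/-- The interval of the shifted module N_{→d}. -/
def shiftSet (I : Set (Pt n)) (d : ℝ) : Set (Pt n) := {x | x + diag n d ∈ I}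

/-- A vertex of (the boundary of) a set: a boundary point through which no
nontrivial line segment of the boundary passes. -/
def IsVertex (I : Set (Pt n)) (x : Pt n) : Prop :=
  x ∈ frontier I ∧
    ¬ ∃ v : Pt n, v ≠ 0 ∧ ∃ ε > (0:ℝ), ∀ t : ℝ, |t| < ε → x + t • v ∈ frontier I

/-- An axis-aligned (possibly degenerate) rectangle. -/
def IsRect (R : Set (Pt n)) : Prop := ∃ a b : Pt n, a ≤ b ∧ R = Set.Icc a b

/-- A discretely presented interval: a finite union of rectangles. -/
def DiscPresented (I : Set (Pt n)) : Prop :=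
  ∃ F : Finset (Set (Pt n)), (∀ R ∈ F, IsRect R) ∧ I = ⋃ R ∈ F, (R : Set (Pt n))

/-- f is a facet of I orthogonal to direction i: contained in a hyperplane
{y_i = c}, contained in the lower or upper boundary, and (n−1)-dimensional
(contains a full hyperplane patch around one of its points). -/
def IsFacetDir (I : Set (Pt n)) (f : Set (Pt n)) (i : Fin n) : Prop :=
  ∃ c : ℝ, f ⊆ {y | y i = c} ∧ (f ⊆ lowerBd I ∨ f ⊆ upperBd I) ∧
    ∃ z ∈ f, ∃ ε > (0:ℝ), ∀ y : Pt n, y i = c → dist y z < ε → y ∈ f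

/-- The set D(x) of the four diagonal boundary distances. -/
def candD (IM IN : Set (Pt n)) (x : Pt n) : Set ℝ≥0∞ :=
  {dl x (lowerBd IM), dl x (lowerBd IN), dl x (upperBd IM), dl x (upperBd IN)}

/-- The candidate set S. -/
def candS (IM IN : Set (Pt n)) : Set ℝ≥0∞ :=
  {d | ∃ x : Pt n, (IsVertex IM x ∨ IsVertex IN x) ∧
    (d ∈ candD IM IN x ∨ 2 * d ∈ candD IM IN x)}

/-- One-sided limit lim_{ε→0+} f(x − ε v) (junk value if the limit fails to exist). -/
def dlim (f : Pt n → ℤ) (x v : Pt n) : ℤ :=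
  limUnder (nhdsWithin (0:ℝ) (Set.Ioi 0)) (fun ε : ℝ => f (x - ε • v))

/-- The indicator vector Σ_{i ∈ s} e_i. -/
def basisVec (n : ℕ) (s : Finset (Fin n)) : Pt n := fun i => if i ∈ s then 1 else 0

/-- The differential Δf(x) = Σ_k (−1)^k Σ_{|s|=k} lim_{ε→0+} f(x − ε Σ_{i∈s} e_i). -/
def diffl (f : Pt n → ℤ) (x : Pt n) : ℤ :=
  ∑ s : Finset (Fin n), (-1 : ℤ) ^ s.card * dlim f x (basisVec n s)

/-- Right continuity of f : ℝⁿ → ℤ. -/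
def RightCont (f : Pt n → ℤ) : Prop :=
  ∀ x : Pt n, Filter.Tendsto f (nhdsWithin x (Set.Ici x)) (nhds (f x))

/-- A nice function: right continuous, finitely supported differential,
support bounded below. -/
def NiceFn (f : Pt n → ℤ) : Prop :=
  RightCont f ∧ {x | diffl f x ≠ 0}.Finite ∧ ∃ a : ℝ, ∀ x, f x ≠ 0 → ∀ i, a ≤ x i

/-- Positive part Δf₊. -/
def difflp (f : Pt n → ℤ) (x : Pt n) : ℤ := max (diffl f x) 0
/-- Negative part Δf₋. -/
def difflm (f : Pt n → ℤ) (x : Pt n) : ℤ := min (diffl f x) 0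

/-- Σ_{y ≤ x} g(y), as a finite sum over the support. -/
def sumLe (g : Pt n → ℤ) (x : Pt n) : ℤ := ∑ᶠ y ∈ {y : Pt n | y ≤ x}, g y

/-- The δ-extension f^{+δ}(x) = f_{Σ+}(x+δ⃗) + f_{Σ−}(x−δ⃗). -/
def extend (f : Pt n → ℤ) (δ : ℝ) (x : Pt n) : ℤ :=
  sumLe (difflp f) (x + diag n δ) + sumLe (difflm f) (x - diag n δ)

/-- The δ-shrinking f^{−δ}(x) = f_{Σ−}(x+δ⃗) + f_{Σ+}(x−δ⃗). -/
def shrink (f : Pt n → ℤ) (δ : ℝ) (x : Pt n) : ℤ :=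
  sumLe (difflm f) (x + diag n δ) + sumLe (difflp f) (x - diag n δ)

/-- d₊(f,g) = inf{δ : f ≤ g^{+δ}, g ≤ f^{+δ}}. -/
def dplus (f g : Pt n → ℤ) : ℝ≥0∞ :=
  ⨅ (δ : ℝ≥0) (_ : (∀ x, f x ≤ extend g δ x) ∧ (∀ x, g x ≤ extend f δ x)), (δ : ℝ≥0∞)

/-- d₋(f,g) = inf{δ : f ≥ g^{−δ}, g ≥ f^{−δ}}. -/
def dminus (f g : Pt n → ℤ) : ℝ≥0∞ :=
  ⨅ (δ : ℝ≥0) (_ : (∀ x, shrink g δ x ≤ f x) ∧ (∀ x, shrink f δ x ≤ g x)), (δ : ℝ≥0∞)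

/-- The dimension distance d₀ = min(d₋, d₊). -/
def d0 (f g : Pt n → ℤ) : ℝ≥0∞ := min (dminus f g) (dplus f g)

/-- The dimension function dm M(x) = dim M_x (as an integer). -/
def dmFun (M : PersMod n k) : Pt n → ℤ := fun x => (Module.finrank k (M.V x) : ℤ)

/-- A nice persistence module: all structure maps over sufficiently small
diagonal shifts are injective or surjective. -/
def PersMod.Nice (M : PersMod n k) : Prop :=
  ∃ ε₀ > (0:ℝ), ∀ ε : ℝ, ∀ h0 : 0 < ε, ε < ε₀ → ∀ x : Pt n,
    Function.Injective (M.ρ (le_add_diag x h0.le)) ∨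
      Function.Surjective (M.ρ (le_add_diag x h0.le))

/-- Composition ρ_i ∘ ... ∘ ρ₁ of a chain of linear maps. -/
def chainComp {K : Type*} [Field K] (V : ℕ → Type*) [∀ i, AddCommGroup (V i)]
    [∀ i, Module K (V i)] (ρ : ∀ i, V i →ₗ[K] V (i+1)) : ∀ i, V 0 →ₗ[K] V i
  | 0 => LinearMap.id
  | (i+1) => (ρ i).comp (chainComp V ρ i)

/-! The interleaving maps of the direct sums are defined summandwise: a matched summand is sent
by the interleaving map of its pair to its partner, an unmatched summand to zero. Naturality holds
summandwise; the triangle identities hold on matched summands by the triangles of the pairs, and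
on unmatched summands because their structure maps over `2δ⃗` vanish. Taking the infimum over
matchings gives `d_I ≤ d_B`. -/

section Matching

variable {ι κ : Type} [Fintype ι] [Fintype κ] {Ms : ι → PersMod n k} {Ns : κ → PersMod n k}

lemma PersMod.DTrivial.ρ_add_diag_add_diag {M : PersMod n k} {δ : ℝ≥0}
    (hM : M.DTrivial (2 * δ)) (x : Pt n) :
    M.ρ ((le_add_diag x δ.coe_nonneg).trans (le_add_diag _ δ.coe_nonneg)) = 0 := by
  have hx : x + diag n δ + diag n δ = x + diag n ((2 * δ : ℝ≥0) : ℝ) := by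
    funext i; simp only [Pi.add_apply, diag]; push_cast; ring
  have ρ_eq_zero : ∀ y (_ : y = x + diag n ((2 * δ : ℝ≥0) : ℝ)) (h : x ≤ y), M.ρ h = 0 := by
    rintro _ rfl _; exact hM x
  exact ρ_eq_zero _ hx _

def matchingMap (R : ι → κ → Prop) (d : ℝ)
    (f : ∀ i j, R i j → ∀ x, (Ms i).V x →ₗ[k] (Ns j).V (x + diag n d)) (x : Pt n) :
    (dirSum Ms).V x →ₗ[k] (dirSum Ns).V (x + diag n d) :=
  LinearMap.pi fun j =>
    if h : ∃ i, R i j then (f h.choose j h.choose_spec x).comp (LinearMap.proj h.choose) else 0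

variable {R : ι → κ → Prop} {d : ℝ}
  {f : ∀ i j, R i j → ∀ x, (Ms i).V x →ₗ[k] (Ns j).V (x + diag n d)}

lemma matchingMap_apply {x : Pt n} (v : (dirSum Ms).V x) (j : κ) :
    matchingMap R d f x v j =
      if h : ∃ i, R i j then f h.choose j h.choose_spec x (v h.choose) else 0 := by
  change (if h : ∃ i, R i j then (f h.choose j h.choose_spec x).comp (LinearMap.proj h.choose)
    else 0 : (∀ i, (Ms i).V x) →ₗ[k] (Ns j).V (x + diag n d)) v = _
  split_ifs <;> rfl

lemma matchingMap_apply_of_rel (hR : ∀ i i' j, R i j → R i' j → i = i') {x : Pt n}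
    (v : (dirSum Ms).V x) {i : ι} {j : κ} (hij : R i j) :
    matchingMap R d f x v j = f i j hij x (v i) := by
  have hex : ∃ i', R i' j := ⟨i, hij⟩
  obtain rfl : hex.choose = i := hR _ _ _ hex.choose_spec hij
  rw [matchingMap_apply, dif_pos hex]

lemma matchingMap_apply_of_forall_not {x : Pt n} (v : (dirSum Ms).V x) {j : κ}
    (hj : ∀ i, ¬ R i j) : matchingMap R d f x v j = 0 := by
  rw [matchingMap_apply, dif_neg (not_exists.2 hj)]

lemma matchingMap_natural (hR : ∀ i i' j, R i j → R i' j → i = i')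
    (hf : ∀ i j (hij : R i j) {x y : Pt n} (h : x ≤ y),
      (f i j hij y).comp ((Ms i).ρ h) = ((Ns j).ρ (add_le_add h le_rfl)).comp (f i j hij x))
    {x y : Pt n} (h : x ≤ y) :
    (matchingMap R d f y).comp ((dirSum Ms).ρ h)
      = ((dirSum Ns).ρ (add_le_add h le_rfl)).comp (matchingMap R d f x) := by
  refine LinearMap.ext fun v => funext fun j => ?_
  change matchingMap R d f y ((dirSum Ms).ρ h v) j = (Ns j).ρ _ (matchingMap R d f x v j)
  by_cases hj : ∃ i, R i j
  · obtain ⟨i, hij⟩ := hj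
    rw [matchingMap_apply_of_rel hR _ hij, matchingMap_apply_of_rel hR _ hij]
    exact LinearMap.congr_fun (hf i j hij h) (v i)
  · rw [matchingMap_apply_of_forall_not _ (not_exists.1 hj),
      matchingMap_apply_of_forall_not _ (not_exists.1 hj), map_zero]

lemma matchingMap_comp_matchingMap {δ : ℝ≥0}
    {f : ∀ i j, R i j → ∀ x, (Ms i).V x →ₗ[k] (Ns j).V (x + diag n δ)}
    {g : ∀ j i, R i j → ∀ x, (Ns j).V x →ₗ[k] (Ms i).V (x + diag n δ)}
    (hR : ∀ i i' j, R i j → R i' j → i = i') (hR' : ∀ j j' i, R i j → R i j' → j = j')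
    (hfg : ∀ i j (hij : R i j) x,
      (Ms i).ρ ((le_add_diag x δ.coe_nonneg).trans (le_add_diag _ δ.coe_nonneg))
        = (g j i hij (x + diag n δ)).comp (f i j hij x))
    (htriv : ∀ i, (∀ j, ¬ R i j) → (Ms i).DTrivial (2 * δ)) (x : Pt n) :
    (dirSum Ms).ρ ((le_add_diag x δ.coe_nonneg).trans (le_add_diag _ δ.coe_nonneg))
      = (matchingMap (fun j i => R i j) δ g (x + diag n δ)).comp (matchingMap R δ f x) := by
  refine LinearMap.ext fun v => funext fun i => ?_
  change (Ms i).ρ _ (v i) = matchingMap (fun j i => R i j) δ g _ (matchingMap R δ f x v) i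
  by_cases hi : ∃ j, R i j
  · obtain ⟨j, hij⟩ := hi
    rw [matchingMap_apply_of_rel (R := fun j i => R i j) hR' _ hij,
      matchingMap_apply_of_rel hR _ hij]
    exact LinearMap.congr_fun (hfg i j hij x) (v i)
  · rw [matchingMap_apply_of_forall_not (R := fun j i => R i j) _ (not_exists.1 hi),
      (htriv i (not_exists.1 hi)).ρ_add_diag_add_diag x, LinearMap.zero_apply]

theorem dirSum_interleaved_of_matching {δ : ℝ≥0}
    (hR : ∀ i i' j, R i j → R i' j → i = i') (hR' : ∀ j j' i, R i j → R i j' → j = j')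
    (hMtriv : ∀ i, (∀ j, ¬ R i j) → (Ms i).DTrivial (2 * δ))
    (hNtriv : ∀ j, (∀ i, ¬ R i j) → (Ns j).DTrivial (2 * δ))
    (hpair : ∀ i j, R i j → (Ms i).Interleaved (Ns j) δ) :
    (dirSum Ms).Interleaved (dirSum Ns) δ := by
  choose φ ψ hφ hψ hψφ hφψ using hpair
  exact ⟨matchingMap R δ φ, matchingMap (fun j i => R i j) δ (fun j i => ψ i j),
    matchingMap_natural hR hφ, matchingMap_natural hR' (fun j i => hψ i j),
    matchingMap_comp_matchingMap hR hR' hψφ hMtriv,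
    matchingMap_comp_matchingMap (R := fun j i => R i j) hR' hR
      (fun j i => hφψ i j) hNtriv⟩

theorem dirSum_interleaved_of_optionMatching {δ : ℝ≥0} (μ : ι → Option κ)
    (hinj : ∀ i i' j, μ i = some j → μ i' = some j → i = i')
    (hMtriv : ∀ i, μ i = none → (Ms i).DTrivial (2 * δ))
    (hNtriv : ∀ j, (∀ i, μ i ≠ some j) → (Ns j).DTrivial (2 * δ))
    (hpair : ∀ i j, μ i = some j → (Ms i).Interleaved (Ns j) δ) :
    (dirSum Ms).Interleaved (dirSum Ns) δ :=
  dirSum_interleaved_of_matching (R := fun i j => μ i = some j) hinj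
    (fun _ _ _ hj hj' => Option.some_injective _ (hj.symm.trans hj'))
    (fun i hi => hMtriv i (Option.eq_none_iff_forall_ne_some.2 hi)) hNtriv hpair

end Matching

lemma PersMod.dI_le_of_interleaved {M N : PersMod n k} {δ : ℝ≥0} (h : M.Interleaved N δ) :
    M.dI N ≤ δ :=
  iInf₂_le δ h

/-- For 1-parameter persistence modules, a δ-matching between the
indecomposable summands (matched pairs δ-interleaved, unmatched summands
2δ-trivial) yields a δ-interleaving of the direct sums; consequently
d_I ≤ d_B (the infimum over δ admitting a δ-matching). -/
theorem stmt0 {k : Type*} [Field k] {a b : ℕ}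
    (Ms : Fin a → PersMod 1 k) (Ns : Fin b → PersMod 1 k) (δ : ℝ≥0)
    (μ : Fin a → Option (Fin b))
    (hinj : ∀ i i' j, μ i = some j → μ i' = some j → i = i')
    (hMtriv : ∀ i, μ i = none → (Ms i).DTrivial (2 * δ))
    (hNtriv : ∀ j, (∀ i, μ i ≠ some j) → (Ns j).DTrivial (2 * δ))
    (hpair : ∀ i j, μ i = some j → (Ms i).Interleaved (Ns j) δ) :
    (dirSum Ms).Interleaved (dirSum Ns) δ ∧
    (dirSum Ms).dI (dirSum Ns) ≤
      ⨅ (δ' : ℝ≥0) (_ : ∃ μ' : Fin a → Option (Fin b),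
          (∀ i i' j, μ' i = some j → μ' i' = some j → i = i') ∧
          (∀ i, μ' i = none → (Ms i).DTrivial (2 * δ')) ∧
          (∀ j, (∀ i, μ' i ≠ some j) → (Ns j).DTrivial (2 * δ')) ∧
          (∀ i j, μ' i = some j → (Ms i).Interleaved (Ns j) δ')),
        (δ' : ℝ≥0∞) := by
  refine ⟨dirSum_interleaved_of_optionMatching μ hinj hMtriv hNtriv hpair,
    le_iInf₂ fun δ' hδ' => ?_⟩
  obtain ⟨μ', hinj', hMtriv', hNtriv', hpair'⟩ := hδ'
  exact PersMod.dI_le_of_interleaved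
    (dirSum_interleaved_of_optionMatching μ' hinj' hMtriv' hNtriv' hpair')

end
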